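/- There is an absolute constant C such that for every irrational α and all indices n ≤ ℓ, Σ_{|j| ≥ q_ℓ, j≠0} (1/j²)·(‖q_n j α‖²/‖j α‖²) ≤ C·q_n/q_ℓ, where q_n and q_ℓ are denominators of α. -/

import Mathlib

open MeasureTheory Filter
open scoped Classical

/-- The Gauss map. -/
noncomputable def gaussMap (x : ℝ) : ℝ := Int.fract x⁻¹

/-- Partial quotients `a n` (`n ≥ 1`) of the continued fraction of `α ∈ (0,1)`:
`a n = ⌊1 / G^[n-1] α⌋`. -/
noncomputable def pquot (α : ℝ) : ℕ → ℕ
  | 0 => 0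
  | n + 1 => ⌊(gaussMap^[n] α)⁻¹⌋.toNat

/-- Denominators `q n` of the convergents of the continued fraction of `α`:
`q 0 = 1`, `q 1 = a 1`, `q (n+2) = a (n+2) * q (n+1) + q n`. -/
noncomputable def cfDen (α : ℝ) : ℕ → ℕ
  | 0 => 1
  | 1 => pquot α 1
  | n + 2 => pquot α (n + 2) * cfDen α (n + 1) + cfDen α n

/-- Ergodic (Birkhoff) sums `φ_N(x) = ∑_{j<N} φ(x + jα)` for the rotation by `α`. -/
noncomputable def birk (φ : ℝ → ℝ) (α : ℝ) (N : ℕ) (x : ℝ) : ℝ :=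
  ∑ j ∈ Finset.range N, φ (x + j * α)

/-- Square of the L² norm on the circle `[0,1)`. -/
noncomputable def sqL2 (f : ℝ → ℝ) : ℝ := ∫ x in (0:ℝ)..1, (f x) ^ 2

/-- L² norm on the circle `[0,1)`. -/
noncomputable def normL2 (f : ℝ → ℝ) : ℝ := Real.sqrt (sqL2 f)

/-- Fourier coefficient `c_r(φ) = ∫₀¹ φ(x) e^{-2πirx} dx`. -/
noncomputable def fCoeff (φ : ℝ → ℝ) (r : ℤ) : ℂ :=
  ∫ x in (0:ℝ)..1, (φ x : ℂ) * Complex.exp (-(2 * Real.pi * Complex.I * r * x))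

/-- `γ_r(φ) = r · c_r(φ)`. -/
noncomputable def gam (φ : ℝ → ℝ) (r : ℤ) : ℂ := (r : ℂ) * fCoeff φ r

/-- `K(φ) = sup_{r ≠ 0} |γ_r(φ)|`. -/
noncomputable def Kc (φ : ℝ → ℝ) : ℝ :=
  ⨆ r : {r : ℤ // r ≠ 0}, ‖gam φ r.1‖

/-- Total variation of `f` on `[0,1)`. -/
noncomputable def variation (f : ℝ → ℝ) : ℝ := (eVariationOn f (Set.Ico 0 1)).toReal

/-- The class 𝒞: 1-periodic, bounded variation on `[0,1)`, centered. -/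
structure ClassC (φ : ℝ → ℝ) : Prop where
  periodic : Function.Periodic φ 1
  bv : BoundedVariationOn φ (Set.Ico 0 1)
  centered : (∫ x in (0:ℝ)..1, φ x) = 0

/-- Condition (H): a positive proportion of the `γ_{q_j}(φ)` stay bounded away from `0`. -/
def CondH (α : ℝ) (φ : ℝ → ℝ) : Prop :=
  ∃ N₀ : ℕ, ∃ η θ₀ : ℝ, 0 < N₀ ∧ 0 < η ∧ 0 < θ₀ ∧ ∀ N : ℕ, N₀ ≤ N →
    θ₀ ≤ (((Finset.Icc 1 N).filter
      fun j => η ≤ ‖gam φ (cfDen α j : ℤ)‖).card : ℝ) / (N : ℝ)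

/-- `m(n) = ℓ` iff `n ∈ [q_ℓ, q_{ℓ+1})`. -/
noncomputable def mIdx (α : ℝ) (n : ℕ) : ℕ := sSup {ℓ : ℕ | cfDen α ℓ ≤ n}

/-- Distance to the nearest integer. -/
noncomputable def nint (x : ℝ) : ℝ := |x - (round x : ℝ)|

/-- The standard normal cumulative distribution function. -/
noncomputable def stdNormalCDF (x : ℝ) : ℝ :=
  ∫ u in Set.Iic x, Real.exp (-(u ^ 2) / 2) / Real.sqrt (2 * Real.pi)

/-- Kolmogorov distance between the distribution of `g` (as a random variable on the
circle `[0,1)` with Lebesgue measure) and the standard normal distribution. -/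
noncomputable def kolDistN (g : ℝ → ℝ) : ℝ :=
  ⨆ x : ℝ, |(volume {t : ℝ | t ∈ Set.Ico (0:ℝ) 1 ∧ g t ≤ x}).toReal - stdNormalCDF x|

/-- Hypothesis (A): polynomially bounded partial quotients. -/
def HypA (α : ℝ) : Prop :=
  ∃ A p : ℝ, 1 ≤ A ∧ 0 ≤ p ∧ ∀ n : ℕ, 1 ≤ n → (pquot α n : ℝ) ≤ A * (n : ℝ) ^ p

/-!
Write `q = q_ℓ` and `k = q_n ≤ q`. Since `‖k x‖ ≤ min (k ‖x‖, 1/2)`, the summand at `j` is at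
most `j⁻² min (k², 1 / (4 ‖jα‖²))`. Sort the `j` with `|j| ≥ q` by sign and block
`⌊|j| / q⌋ = K`, and the points `jα` into cells of width `1 / (2q)` around the nearest integer.
Two `j` of the same sign and block differ by some `0 < |d| < q`, and best approximation by
convergents gives `‖dα‖ > 1 / (2q)`, so they lie in different cells. A point in cell `b ≥ 1` has
`‖jα‖ ≥ b / (2q)`, so the cells contribute `∑_b min (k², q² / b²) ≤ 4kq`, and the blocks
`∑_K 1 / (Kq)² ≤ 2 / q²`.
-/

theorem Irrational.gaussMap {x : ℝ} (h : Irrational x) : Irrational (gaussMap x) := by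
  rw [_root_.gaussMap, ← Int.self_sub_floor]
  exact h.inv.sub_intCast _

theorem gaussMap_iterate_succ (α : ℝ) (k : ℕ) :
    gaussMap^[k + 1] α = Int.fract (gaussMap^[k] α)⁻¹ :=
  Function.iterate_succ_apply' _ _ _

theorem gaussMap_iterate_mem_Ioo {α : ℝ} (hirr : Irrational α) (hα : α ∈ Set.Ioo 0 1)
    (k : ℕ) : gaussMap^[k] α ∈ Set.Ioo 0 1 := by
  have hirr_k : Irrational (gaussMap^[k] α) := by
    induction k with
    | zero => exact hirr
    | succ k ih => rw [Function.iterate_succ_apply']; exact ih.gaussMap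
  cases k with
  | zero => exact hα
  | succ k =>
    rw [gaussMap_iterate_succ] at hirr_k ⊢
    exact ⟨(Int.fract_nonneg _).lt_of_ne (by exact_mod_cast (hirr_k.ne_int 0).symm),
      Int.fract_lt_one _⟩

theorem Int.ne_zero_and_mul_nonpos_of_mul_add_mul {x y Q₀ Q₁ d : ℤ} (h₀ : 0 < Q₀)
    (hd0 : d ≠ 0) (hd : |d| < Q₁) (h : x * Q₀ + y * Q₁ = d) : x ≠ 0 ∧ x * y ≤ 0 := by
  obtain ⟨hd₁, hd₂⟩ := abs_lt.1 hd
  constructor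
  · rintro rfl
    rcases lt_trichotomy y 0 with hy | rfl | hy
    · nlinarith
    · simp only [zero_mul, add_zero] at h; exact hd0 h.symm
    · nlinarith
  · rcases lt_trichotomy x 0 with hx | rfl | hx <;> rcases lt_trichotomy y 0 with hy | rfl | hy <;>
      nlinarith

theorem le_abs_intCast_mul_sub {x y : ℤ} {a b : ℝ} (hx : x ≠ 0) (hxy : x * y ≤ 0) (ha : 0 < a)
    (hb : 0 ≤ b) : a ≤ |x * a - y * b| := by
  rcases lt_or_gt_of_ne hx with hx | hx
  · have hx' : (x : ℝ) ≤ -1 := by exact_mod_cast Int.le_sub_one_of_lt hx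
    have hy : (0 : ℝ) ≤ y := by exact_mod_cast nonneg_of_mul_nonpos_right hxy hx
    rw [abs_sub_comm, le_abs]; left; nlinarith
  · have hx' : (1 : ℝ) ≤ x := by exact_mod_cast hx
    have hy : (y : ℝ) ≤ 0 := by exact_mod_cast nonpos_of_mul_nonpos_right hxy hx
    rw [le_abs]; left; nlinarith

section ContinuedFraction

variable {α : ℝ}

/-- The numerators `p n` of the convergents `p n / q n`. -/
noncomputable def cfNum (α : ℝ) : ℕ → ℕ
  | 0 => 0
  | 1 => 1
  | n + 2 => pquot α (n + 2) * cfNum α (n + 1) + cfNum α n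

/-- `|q k α - p k|`, as a product of Gauss-map iterates (`cfDen_mul_sub_cfNum`). -/
noncomputable def cfErr (α : ℝ) (k : ℕ) : ℝ := ∏ i ∈ Finset.range (k + 1), gaussMap^[i] α

theorem pquot_succ_eq_floor (hT : ∀ k, gaussMap^[k] α ∈ Set.Ioo 0 1) (k : ℕ) :
    (pquot α (k + 1) : ℤ) = ⌊(gaussMap^[k] α)⁻¹⌋ := by
  have h1 : 1 ≤ (gaussMap^[k] α)⁻¹ := (one_le_inv₀ (hT k).1).2 (hT k).2.le
  exact Int.toNat_of_nonneg (Int.floor_nonneg.2 (zero_le_one.trans h1))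

theorem one_le_pquot_succ (hT : ∀ k, gaussMap^[k] α ∈ Set.Ioo 0 1) (k : ℕ) :
    1 ≤ pquot α (k + 1) := by
  have h1 : 1 ≤ (gaussMap^[k] α)⁻¹ := (one_le_inv₀ (hT k).1).2 (hT k).2.le
  have : (1 : ℤ) ≤ pquot α (k + 1) := by
    rw [pquot_succ_eq_floor hT]; exact Int.le_floor.2 (by exact_mod_cast h1)
  exact_mod_cast this

theorem inv_gaussMap_iterate (hT : ∀ k, gaussMap^[k] α ∈ Set.Ioo 0 1) (k : ℕ) :
    (gaussMap^[k] α)⁻¹ = pquot α (k + 1) + gaussMap^[k + 1] α := by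
  have h := congrArg (fun z : ℤ => (z : ℝ)) (pquot_succ_eq_floor hT k)
  push_cast at h
  rw [gaussMap_iterate_succ, Int.fract, h]
  ring

theorem cfErr_succ (k : ℕ) : cfErr α (k + 1) = cfErr α k * gaussMap^[k + 1] α :=
  Finset.prod_range_succ _ _

theorem cfErr_pos (hT : ∀ k, gaussMap^[k] α ∈ Set.Ioo 0 1) (k : ℕ) : 0 < cfErr α k :=
  Finset.prod_pos fun i _ => (hT i).1

theorem cfErr_succ_lt (hT : ∀ k, gaussMap^[k] α ∈ Set.Ioo 0 1) (k : ℕ) :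
    cfErr α (k + 1) < cfErr α k := by
  rw [cfErr_succ]
  exact mul_lt_of_lt_one_right (cfErr_pos hT k) (hT (k + 1)).2

theorem cfErr_zero : cfErr α 0 = α := by simp [cfErr]

theorem cfErr_one (hT : ∀ k, gaussMap^[k] α ∈ Set.Ioo 0 1) :
    cfErr α 1 = 1 - pquot α 1 * α := by
  have h := inv_gaussMap_iterate hT 0
  have hα : α ≠ 0 := (hT 0).1.ne'
  simp only [Function.iterate_zero, id_eq, zero_add] at h
  rw [cfErr_succ, cfErr_zero, zero_add, ← sub_eq_of_eq_add' h, mul_sub, mul_inv_cancel₀ hα]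
  ring

theorem cfErr_add_two (hT : ∀ k, gaussMap^[k] α ∈ Set.Ioo 0 1) (k : ℕ) :
    cfErr α (k + 2) = cfErr α k - pquot α (k + 2) * cfErr α (k + 1) := by
  have h := inv_gaussMap_iterate hT (k + 1)
  have hT0 : gaussMap^[k + 1] α ≠ 0 := (hT (k + 1)).1.ne'
  rw [cfErr_succ, ← sub_eq_of_eq_add' h, cfErr_succ, mul_sub, mul_assoc,
    mul_inv_cancel₀ hT0]
  ring

theorem one_le_cfDen (hT : ∀ k, gaussMap^[k] α ∈ Set.Ioo 0 1) (k : ℕ) : 1 ≤ cfDen α k := by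
  induction k using Nat.strong_induction_on with
  | _ k ih =>
    match k with
    | 0 => exact le_rfl
    | 1 => exact one_le_pquot_succ hT 0
    | k + 2 => have := ih k (by omega); rw [cfDen]; omega

theorem cfDen_le_succ (hT : ∀ k, gaussMap^[k] α ∈ Set.Ioo 0 1) (k : ℕ) :
    cfDen α k ≤ cfDen α (k + 1) := by
  match k with
  | 0 => exact one_le_pquot_succ hT 0
  | k + 1 =>
    rw [cfDen]
    nlinarith [one_le_pquot_succ hT (k + 1)]

theorem cfDen_mono (hT : ∀ k, gaussMap^[k] α ∈ Set.Ioo 0 1) : Monotone (cfDen α) :=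
  monotone_nat_of_le_succ (cfDen_le_succ hT)

theorem cfNum_mul_cfDen_sub (k : ℕ) :
    (cfNum α (k + 1) : ℤ) * cfDen α k - cfNum α k * cfDen α (k + 1) = (-1) ^ k := by
  induction k with
  | zero => simp [cfDen, cfNum]
  | succ k ih =>
    rw [cfDen, cfNum]
    push_cast
    linear_combination (-1 : ℤ) * ih

theorem cfDen_mul_sub_cfNum (hT : ∀ k, gaussMap^[k] α ∈ Set.Ioo 0 1) (k : ℕ) :
    (cfDen α k : ℝ) * α - cfNum α k = (-1) ^ k * cfErr α k := by
  induction k using Nat.strong_induction_on with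
  | _ k ih =>
    match k with
    | 0 => simp [cfDen, cfNum, cfErr_zero]
    | 1 => rw [cfErr_one hT]; simp [cfDen, cfNum]
    | k + 2 =>
      rw [cfDen, cfNum, cfErr_add_two hT]
      push_cast
      linear_combination (pquot α (k + 2) : ℝ) * ih (k + 1) (by omega) + ih k (by omega)

theorem cfDen_mul_cfErr_add (hT : ∀ k, gaussMap^[k] α ∈ Set.Ioo 0 1) (k : ℕ) :
    (cfDen α (k + 1) : ℝ) * cfErr α k + cfDen α k * cfErr α (k + 1) = 1 := by
  induction k with
  | zero => rw [cfErr_one hT, cfErr_zero]; simp [cfDen]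
  | succ k ih =>
    rw [cfDen, cfErr_add_two hT]
    push_cast
    linear_combination ih

theorem cfErr_le_abs_mul_sub (hT : ∀ k, gaussMap^[k] α ∈ Set.Ioo 0 1) (m : ℕ) {d e : ℤ}
    (hd0 : d ≠ 0) (hd : |d| < cfDen α (m + 1)) : cfErr α m ≤ |d * α - e| := by
  set σ : ℤ := (-1) ^ m
  have hσ : σ * σ = 1 := by rw [← mul_pow]; norm_num
  have hdet := cfNum_mul_cfDen_sub (α := α) m
  -- `(x, y)`: coordinates of `(d, e)` in the unimodular basis `(q m, p m), (q (m+1), p (m+1))`.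
  set x : ℤ := σ * (cfNum α (m + 1) * d - cfDen α (m + 1) * e)
  set y : ℤ := σ * (cfDen α m * e - cfNum α m * d)
  have hxd : x * cfDen α m + y * cfDen α (m + 1) = d := by
    linear_combination (σ * d) * hdet + d * hσ
  have hxe : x * cfNum α m + y * cfNum α (m + 1) = e := by
    linear_combination (σ * e) * hdet + e * hσ
  have hsplit : (d : ℝ) * α - e = σ * (x * cfErr α m - y * cfErr α (m + 1)) := by
    have hxd' : ((x * cfDen α m + y * cfDen α (m + 1) : ℤ) : ℝ) = d := congrArg _ hxd
    have hxe' : ((x * cfNum α m + y * cfNum α (m + 1) : ℤ) : ℝ) = e := congrArg _ hxe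
    have hσ' : (σ : ℝ) = (-1) ^ m := by simp [σ]
    push_cast at hxd' hxe'
    rw [hσ']
    linear_combination (-α) * hxd' + hxe' + x * cfDen_mul_sub_cfNum hT m
      + y * cfDen_mul_sub_cfNum hT (m + 1)
  obtain ⟨hx0, hxy⟩ := Int.ne_zero_and_mul_nonpos_of_mul_add_mul
    (by exact_mod_cast one_le_cfDen hT m) hd0 hd hxd
  rw [hsplit, abs_mul, show |(σ : ℝ)| = 1 by simp [σ], one_mul]
  exact le_abs_intCast_mul_sub hx0 hxy (cfErr_pos hT m) (cfErr_pos hT (m + 1)).le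

theorem one_div_two_mul_cfDen_lt_nint (hT : ∀ k, gaussMap^[k] α ∈ Set.Ioo 0 1) {ℓ : ℕ}
    {d : ℤ} (hd0 : d ≠ 0) (hd : |d| < cfDen α ℓ) : 1 / (2 * cfDen α ℓ) < nint (d * α) := by
  obtain _ | m := ℓ
  · simp only [cfDen, Nat.cast_one] at hd
    exact absurd (Int.one_le_abs hd0) hd.not_ge
  have hsum := cfDen_mul_cfErr_add hT m
  have hmono : (cfDen α m : ℝ) ≤ cfDen α (m + 1) := by exact_mod_cast cfDen_le_succ hT m
  have hdecr := cfErr_succ_lt hT m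
  have hpos := cfErr_pos hT (m + 1)
  have hq : (0 : ℝ) < cfDen α m := by exact_mod_cast one_le_cfDen hT m
  have hq' : (0 : ℝ) < cfDen α (m + 1) := hq.trans_le hmono
  calc 1 / (2 * (cfDen α (m + 1) : ℝ)) < cfErr α m := by
        rw [div_lt_iff₀ (by positivity)]; nlinarith
    _ ≤ nint (d * α) := cfErr_le_abs_mul_sub hT m hd0 hd

end ContinuedFraction

theorem nint_nonneg (x : ℝ) : 0 ≤ nint x := abs_nonneg _

theorem nint_le_half (x : ℝ) : nint x ≤ 1 / 2 := abs_sub_round x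

theorem nint_natCast_mul_le (k : ℕ) (x : ℝ) : nint (k * x) ≤ k * nint x := by
  calc nint (k * x) ≤ |k * x - ((k * round x : ℤ) : ℝ)| := round_le _ _
    _ = k * nint x := by push_cast; rw [← mul_sub, abs_mul, Nat.abs_cast]; rfl

/-- Cells of width `1 / N` on either side of the nearest integer. -/
noncomputable def nintCell (N : ℕ) (x : ℝ) : Bool × ℕ := (decide (round x ≤ x), ⌊N * nint x⌋₊)

theorem nint_sub_lt_of_nintCell_eq {N : ℕ} (hN : 0 < N) {x y : ℝ}
    (h : nintCell N x = nintCell N y) : nint (x - y) < 1 / N := by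
  obtain ⟨hside, hfloor⟩ := Prod.ext_iff.1 h
  simp only [nintCell, decide_eq_decide] at hside hfloor
  set r := x - round x
  set s := y - round y
  have hN' : (0 : ℝ) < N := by exact_mod_cast hN
  have hcell : |N * nint x - N * nint y| < 1 := by
    have := Nat.floor_le (by have := nint_nonneg x; positivity : (0 : ℝ) ≤ N * nint x)
    have := Nat.floor_le (by have := nint_nonneg y; positivity : (0 : ℝ) ≤ N * nint y)
    have := Nat.lt_floor_add_one (N * nint x)
    have := Nat.lt_floor_add_one (N * nint y)
    rw [hfloor] at *
    rw [abs_sub_lt_iff]; constructor <;> linarith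
  have hrs : |r - s| = |nint x - nint y| := by
    simp only [nint]
    rcases le_or_gt 0 r with hr | hr
    · rw [abs_of_nonneg hr, abs_of_nonneg ((sub_nonneg.2 ∘ hside.1 ∘ sub_nonneg.1) hr)]
    · have hs : s < 0 := by
        by_contra hs
        exact hr.not_ge (sub_nonneg.2 (hside.2 (sub_nonneg.1 (not_lt.1 hs))))
      rw [abs_of_neg hr, abs_of_neg hs, ← abs_neg]; ring_nf
  calc nint (x - y) ≤ |x - y - ((round x - round y : ℤ) : ℝ)| := round_le _ _
    _ = |r - s| := by push_cast; congr 1; ring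
    _ < 1 / N := by
      rw [hrs, lt_div_iff₀ hN', ← abs_of_pos hN', ← abs_mul, mul_comm, mul_sub]
      exact hcell

theorem natCast_nintCell_snd_le (N : ℕ) (x : ℝ) : ((nintCell N x).2 : ℝ) ≤ N * nint x :=
  Nat.floor_le (by have := nint_nonneg x; positivity)

theorem sum_inv_sq_filter_lt_le (s : Finset ℕ) (K : ℕ) :
    ∑ b ∈ s with K < b, ((b : ℝ) ^ 2)⁻¹ ≤ 2 / (K + 1) := by
  refine le_trans (Finset.sum_le_sum_of_subset_of_nonneg ?_ fun _ _ _ => by positivity)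
    (sum_Ioo_inv_sq_le K (s.sup id + 1))
  intro b hb
  obtain ⟨hbs, hKb⟩ := Finset.mem_filter.1 hb
  exact Finset.mem_Ioo.2 ⟨hKb, Nat.lt_succ_of_le (Finset.le_sup (f := id) hbs)⟩

-- The term `b = 0` is `0⁻¹ = 0`.
theorem sum_inv_sq_le_two (s : Finset ℕ) : ∑ b ∈ s, ((b : ℝ) ^ 2)⁻¹ ≤ 2 := by
  rw [← Finset.sum_filter_of_ne (p := (0 < ·)) fun b _ hb => Nat.pos_of_ne_zero (by
    rintro rfl; simp at hb)]
  simpa using sum_inv_sq_filter_lt_le s 0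

noncomputable def clipInvSq (a c : ℝ) (b : ℕ) : ℝ := min (a ^ 2) (c ^ 2 / (max b 1 : ℕ) ^ 2)

theorem clipInvSq_nonneg (a c : ℝ) (b : ℕ) : 0 ≤ clipInvSq a c b :=
  le_min (by positivity) (by positivity)

theorem sum_clipInvSq_le {a c : ℝ} (ha : 0 < a) (hac : a ≤ c) (s : Finset ℕ) :
    ∑ b ∈ s, clipInvSq a c b ≤ 4 * a * c := by
  set K := ⌊c / a⌋₊
  have hK1 : (1 : ℝ) ≤ K := by exact_mod_cast Nat.one_le_floor_iff _ |>.2 ((one_le_div ha).2 hac)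
  have hKc : K * a ≤ c := (le_div_iff₀ ha).1 (Nat.floor_le (div_nonneg (ha.le.trans hac) ha.le))
  have hcK : c < (K + 1) * a := (div_lt_iff₀ ha).1 (Nat.lt_floor_add_one _)
  rw [← Finset.sum_filter_not_add_sum_filter s (K < ·)]
  have hlow : ∑ b ∈ s with ¬K < b, clipInvSq a c b ≤ 2 * a * c := by
    have hcard : ((s.filter (¬K < ·)).card : ℝ) ≤ K + 1 := by
      have : s.filter (¬K < ·) ⊆ Finset.range (K + 1) := fun b hb => by
        simp only [Finset.mem_filter, Finset.mem_range] at hb ⊢; omega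
      exact_mod_cast (Finset.card_le_card this).trans (Finset.card_range _).le
    calc ∑ b ∈ s with ¬K < b, clipInvSq a c b ≤ ∑ b ∈ s with ¬K < b, a ^ 2 :=
          Finset.sum_le_sum fun _ _ => min_le_left _ _
      _ = (s.filter (¬K < ·)).card * a ^ 2 := by rw [Finset.sum_const, nsmul_eq_mul]
      _ ≤ (K + 1) * a ^ 2 := by gcongr
      _ ≤ 2 * a * c := by nlinarith
  have hhigh : ∑ b ∈ s with K < b, clipInvSq a c b ≤ 2 * a * c := by
    calc ∑ b ∈ s with K < b, clipInvSq a c b ≤ ∑ b ∈ s with K < b, c ^ 2 * ((b : ℝ) ^ 2)⁻¹ := by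
          refine Finset.sum_le_sum fun b hb => (min_le_right _ _).trans_eq ?_
          rw [max_eq_left (by have := (Finset.mem_filter.1 hb).2; omega), div_eq_mul_inv]
      _ = c ^ 2 * ∑ b ∈ s with K < b, ((b : ℝ) ^ 2)⁻¹ := (Finset.mul_sum _ _ _).symm
      _ ≤ c ^ 2 * (2 / (K + 1)) := by gcongr; exact sum_inv_sq_filter_lt_le s K
      _ ≤ 2 * a * c := by
          rw [← mul_div_assoc, div_le_iff₀ (by positivity)]; nlinarith
  linarith

theorem nint_mul_sq_div_sq_le_clipInvSq {k c : ℕ} (hkc : k ≤ c) (x : ℝ) :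
    nint (k * x) ^ 2 / nint x ^ 2 ≤ clipInvSq k c (nintCell (2 * c) x).2 := by
  rcases (nint_nonneg x).eq_or_lt with hx | hx
  · rw [← hx, zero_pow two_ne_zero, div_zero]; exact clipInvSq_nonneg _ _ _
  have hkx := nint_natCast_mul_le k x
  have hkx0 := nint_nonneg (k * x)
  have hk : (k : ℝ) ≤ c := by exact_mod_cast hkc
  have hle_k : nint (k * x) ^ 2 / nint x ^ 2 ≤ (k : ℝ) ^ 2 := by
    rw [div_le_iff₀ (by positivity), ← mul_pow]; gcongr
  refine le_min hle_k ?_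
  set b := (nintCell (2 * c) x).2
  rcases Nat.eq_zero_or_pos b with hb | hb
  · rw [hb]; norm_num; nlinarith
  have hbx : (b : ℝ) ≤ 2 * c * nint x := by exact_mod_cast natCast_nintCell_snd_le (2 * c) x
  have hb' : (1 : ℝ) ≤ b := by exact_mod_cast hb
  rw [max_eq_left hb, div_le_div_iff₀ (by positivity) (by positivity)]
  have := nint_le_half (k * x)
  calc nint (k * x) ^ 2 * b ^ 2 ≤ (1 / 2) ^ 2 * (2 * c * nint x) ^ 2 := by gcongr
    _ = c ^ 2 * nint x ^ 2 := by ring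

theorem Finset.sum_mul_le_card_mul_sum_mul_sum {ι γ : Type*} [Fintype γ] (v : Finset ι)
    {κ β : ι → ℕ} {σ : ι → γ} (hinj : Set.InjOn (fun i => (κ i, β i, σ i)) v) {f g : ℕ → ℝ}
    (hf : ∀ K, 0 ≤ f K) (hg : ∀ b, 0 ≤ g b) :
    ∑ i ∈ v, f (κ i) * g (β i)
      ≤ Fintype.card γ * ((∑ K ∈ v.image κ, f K) * ∑ b ∈ v.image β, g b) := by
  classical
  calc ∑ i ∈ v, f (κ i) * g (β i)
      = ∑ t ∈ v.image fun i => (κ i, β i, σ i), f t.1 * g t.2.1 :=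
        (Finset.sum_image (f := fun t => f t.1 * g t.2.1) hinj).symm
    _ ≤ ∑ t ∈ v.image κ ×ˢ v.image β ×ˢ (Finset.univ : Finset γ), f t.1 * g t.2.1 := by
        refine Finset.sum_le_sum_of_subset_of_nonneg ?_ fun t _ _ => mul_nonneg (hf _) (hg _)
        intro t ht
        obtain ⟨i, hi, rfl⟩ := Finset.mem_image.1 ht
        simp only [Finset.mem_product, Finset.mem_univ, and_true]
        exact ⟨Finset.mem_image_of_mem _ hi, Finset.mem_image_of_mem _ hi⟩
    _ = Fintype.card γ * ((∑ K ∈ v.image κ, f K) * ∑ b ∈ v.image β, g b) := by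
        rw [Finset.sum_mul_sum, Finset.mul_sum, Finset.sum_product]
        refine Finset.sum_congr rfl fun K _ => ?_
        rw [Finset.mul_sum, Finset.sum_product]
        refine Finset.sum_congr rfl fun b _ => ?_
        simp only [Finset.sum_const, Finset.card_univ, nsmul_eq_mul]

theorem Int.natAbs_sub_lt_of_natAbs_div_eq {j j' : ℤ} {q : ℕ} (hq : 0 < q)
    (hs : 0 ≤ j ↔ 0 ≤ j') (h : j.natAbs / q = j'.natAbs / q) : (j - j').natAbs < q := by
  have := Nat.div_add_mod j.natAbs q
  have := Nat.div_add_mod j'.natAbs q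
  have := Nat.mod_lt j.natAbs hq
  have := Nat.mod_lt j'.natAbs hq
  rw [h] at *
  omega

theorem eq_of_natAbs_div_eq_of_nintCell_eq {α : ℝ} (hT : ∀ k, gaussMap^[k] α ∈ Set.Ioo 0 1)
    (ℓ : ℕ) {j j' : ℤ} (hsign : 0 ≤ j ↔ 0 ≤ j')
    (hblock : j.natAbs / cfDen α ℓ = j'.natAbs / cfDen α ℓ)
    (hcell : nintCell (2 * cfDen α ℓ) (j * α) = nintCell (2 * cfDen α ℓ) (j' * α)) : j = j' := by
  by_contra hne
  have hq := one_le_cfDen hT ℓ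
  have hclose : nint ((j - j' : ℤ) * α) < 1 / (2 * cfDen α ℓ : ℕ) := by
    push_cast only [Int.cast_sub, sub_mul]
    exact nint_sub_lt_of_nintCell_eq (by omega) hcell
  have hfar := one_div_two_mul_cfDen_lt_nint hT (sub_ne_zero.2 hne)
    (by rw [Int.abs_eq_natAbs]; exact_mod_cast Int.natAbs_sub_lt_of_natAbs_div_eq hq hsign hblock)
  push_cast at hclose hfar
  linarith

theorem sq_natAbs_div_mul_le (j : ℤ) (q : ℕ) : ((j.natAbs / q : ℕ) * q : ℝ) ^ 2 ≤ (j : ℝ) ^ 2 := by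
  have h : ((j.natAbs / q * q : ℕ) : ℝ) ≤ |(j : ℝ)| := by
    rw [← Int.cast_abs, Int.abs_eq_natAbs, Int.cast_natCast]
    exact_mod_cast Nat.div_mul_le_self _ _
  push_cast at h
  rw [← sq_abs (j : ℝ)]
  gcongr

theorem one_div_sq_mul_nint_sq_div_le {k q : ℕ} (hkq : k ≤ q) (hq : 0 < q) {j : ℤ}
    (hj : (q : ℤ) ≤ |j|) (x : ℝ) :
    1 / (j : ℝ) ^ 2 * nint (k * x) ^ 2 / nint x ^ 2
      ≤ (((j.natAbs / q : ℕ) : ℝ) ^ 2)⁻¹ / q ^ 2 * clipInvSq k q (nintCell (2 * q) x).2 := by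
  have hK : 0 < j.natAbs / q := Nat.div_pos (by rw [Int.abs_eq_natAbs] at hj; omega) hq
  have hjK : 1 / (j : ℝ) ^ 2 ≤ (((j.natAbs / q : ℕ) : ℝ) ^ 2)⁻¹ / q ^ 2 := by
    rw [← one_div, div_div, ← mul_pow]
    exact one_div_le_one_div_of_le (by positivity) (sq_natAbs_div_mul_le j q)
  rw [mul_div_assoc]
  exact mul_le_mul hjK (nint_mul_sq_div_sq_le_clipInvSq hkq x) (by positivity) (by positivity)

theorem tail_sum_nint_ratio_le {α : ℝ} (hT : ∀ k, gaussMap^[k] α ∈ Set.Ioo 0 1) {n ℓ : ℕ}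
    (hnℓ : n ≤ ℓ) (u : Finset ℤ) :
    ∑ j ∈ u with (cfDen α ℓ : ℤ) ≤ |j|,
        1 / (j : ℝ) ^ 2 * nint (cfDen α n * j * α) ^ 2 / nint (j * α) ^ 2
      ≤ 32 * (cfDen α n : ℝ) / cfDen α ℓ := by
  set q := cfDen α ℓ
  set k := cfDen α n
  have hq : 0 < q := one_le_cfDen hT ℓ
  have hkq : k ≤ q := cfDen_mono hT hnℓ
  have hk : (0 : ℝ) < k := by exact_mod_cast one_le_cfDen hT n
  set v := u.filter fun j => (q : ℤ) ≤ |j|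
  have hinj : Set.InjOn (fun j : ℤ => (j.natAbs / q, (nintCell (2 * q) (j * α)).2,
      decide (0 ≤ j), (nintCell (2 * q) (j * α)).1)) v := by
    intro j _ j' _ hkey
    simp only [Prod.mk.injEq, decide_eq_decide] at hkey
    obtain ⟨hblock, hcell, hsign, hside⟩ := hkey
    exact eq_of_natAbs_div_eq_of_nintCell_eq hT ℓ hsign hblock (Prod.ext hside hcell)
  calc ∑ j ∈ v, 1 / (j : ℝ) ^ 2 * nint (k * j * α) ^ 2 / nint (j * α) ^ 2
      ≤ ∑ j ∈ v, (((j.natAbs / q : ℕ) : ℝ) ^ 2)⁻¹ / q ^ 2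
          * clipInvSq k q (nintCell (2 * q) (j * α)).2 := by
        refine Finset.sum_le_sum fun j hj => ?_
        rw [mul_assoc]
        exact one_div_sq_mul_nint_sq_div_le hkq hq (Finset.mem_filter.1 hj).2 _
    _ ≤ Fintype.card (Bool × Bool) * ((∑ K ∈ v.image (·.natAbs / q), ((K : ℝ) ^ 2)⁻¹ / q ^ 2)
          * ∑ b ∈ v.image fun j : ℤ => (nintCell (2 * q) (j * α)).2, clipInvSq k q b) :=
        Finset.sum_mul_le_card_mul_sum_mul_sum v hinj (f := fun K => ((K : ℝ) ^ 2)⁻¹ / q ^ 2)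
          (fun _ => by positivity) (clipInvSq_nonneg _ _)
    _ ≤ 4 * (2 / q ^ 2 * (4 * k * q)) := by
        rw [← Finset.sum_div, Fintype.card_prod, Fintype.card_bool]
        have hK := sum_inv_sq_le_two (v.image (·.natAbs / q))
        have hB := sum_clipInvSq_le hk (by exact_mod_cast hkq : (k : ℝ) ≤ q)
          (v.image fun j : ℤ => (nintCell (2 * q) (j * α)).2)
        have hB0 := Finset.sum_nonneg fun b (_ : b ∈ v.image fun j : ℤ =>
          (nintCell (2 * q) (j * α)).2) => clipInvSq_nonneg k q b
        norm_num
        exact mul_le_mul (div_le_div_of_nonneg_right hK (by positivity)) hB hB0 (by positivity)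
    _ = 32 * k / q := by field_simp; ring

/-- tail bound for `∑_{|j| ≥ q_ℓ} (1/j²) ‖q_n j α‖²/‖j α‖²`. -/
theorem stmt16 :
    ∃ C : ℝ, 0 < C ∧
      ∀ α : ℝ, Irrational α → α ∈ Set.Ioo (0:ℝ) 1 →
      ∀ n ℓ : ℕ, n ≤ ℓ →
        (∑' j : ℤ, if (cfDen α ℓ : ℤ) ≤ |j| then
            (1 / (j : ℝ) ^ 2) * nint ((cfDen α n : ℝ) * (j : ℝ) * α) ^ 2 /
              nint ((j : ℝ) * α) ^ 2
          else 0)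
        ≤ C * (cfDen α n : ℝ) / (cfDen α ℓ : ℝ) := by
  refine ⟨32, by norm_num, fun α hirr hα n ℓ hnℓ => ?_⟩
  refine tsum_le_of_sum_le' (by positivity) fun u => ?_
  rw [← Finset.sum_filter]
  exact tail_sum_nint_ratio_le (gaussMap_iterate_mem_Ioo hirr hα) hnℓ u
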